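/- arXiv:2510.11133 — 2 statements merged into one kernel-verified Lean document; each statement's English description precedes it below -/
import Mathlib

section
/- (Causal Preservation) Let y ∈ {+1, −1}, let e_1, …, e_d be an orthonormal basis of the real inner product space ℝ^d, and let z, Δq, Δp ∈ ℝ^d with coefficients α_i = ⟨z, e_i⟩, γ_i = ⟨Δq, e_i⟩, and ⟨Δp, e_i⟩ = η_i γ_i for real numbers η_i. Fix 1 ≤ m ≤ d and define the trimmed representation ẑ = z − Σ_{i=1}^m ⟨z, e_i⟩ e_i. Suppose the causal boundary classifies z correctly: y⟨z, Δp⟩ > 0. If at least one of the following three conditions holds: (a) y·Σ_{i=1}^m η_i α_i γ_i = 0, (b) y·Σ_{i=1}^m η_i α_i γ_i < 0, or (c) 0 < y·Σ_{i=1}^m η_i α_i γ_i < y·Σ_{i=1}^d η_i α_i γ_i, then the trimmed representation is still classified correctly by the causal boundary: y⟨ẑ, Δp⟩ > 0. -/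
open scoped RealInnerProductSpace BigOperators

/-! By Parseval, `⟪z, Δp⟫ = ∑ i, η i * α i * γ i`, and trimming subtracts exactly the
top-`m` part of this sum. Each of the three conditions says that `y` times this part is below
`y * ⟪z, Δp⟫ > 0`, which leaves a positive remainder. -/

section Trimming

variable {ι E : Type*} [NormedAddCommGroup E] [InnerProductSpace ℝ E]

theorem inner_sub_sum_inner_smul_left (x w : E) (v : ι → E) (s : Finset ι) :
    ⟪x - ∑ i ∈ s, ⟪x, v i⟫ • v i, w⟫ = ⟪x, w⟫ - ∑ i ∈ s, ⟪x, v i⟫ * ⟪v i, w⟫ := by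
  simp only [inner_sub_left, sum_inner, real_inner_smul_left]

theorem OrthonormalBasis.inner_sub_sum_inner_smul_left [Fintype ι]
    (b : OrthonormalBasis ι ℝ E) (x w : E) (s : Finset ι) :
    ⟪x - ∑ i ∈ s, ⟪x, b i⟫ • b i, w⟫ =
      ∑ i, ⟪x, b i⟫ * ⟪b i, w⟫ - ∑ i ∈ s, ⟪x, b i⟫ * ⟪b i, w⟫ := by
  rw [_root_.inner_sub_sum_inner_smul_left, b.sum_inner_mul_inner]

end Trimming

theorem tact_causal_preservation_general
    (d m : ℕ)
    (y : ℝ)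
    (e : OrthonormalBasis (Fin d) ℝ (EuclideanSpace ℝ (Fin d)))
    (z Δp : EuclideanSpace ℝ (Fin d))
    (α γ η : Fin d → ℝ)
    (hα : ∀ i, α i = ⟪z, e i⟫)
    (hη : ∀ i, ⟪Δp, e i⟫ = η i * γ i)
    (zhat : EuclideanSpace ℝ (Fin d))
    (hzhat : zhat = z - ∑ i ∈ Finset.univ.filter (fun i : Fin d => (i : ℕ) < m),
      ⟪z, e i⟫ • e i)
    (hcausal : y * ⟪z, Δp⟫ > 0)
    (hcond :
      (y * ∑ i ∈ Finset.univ.filter (fun i : Fin d => (i : ℕ) < m), η i * (α i * γ i) = 0) ∨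
      (y * ∑ i ∈ Finset.univ.filter (fun i : Fin d => (i : ℕ) < m), η i * (α i * γ i) < 0) ∨
      (0 < y * ∑ i ∈ Finset.univ.filter (fun i : Fin d => (i : ℕ) < m), η i * (α i * γ i) ∧
       y * ∑ i ∈ Finset.univ.filter (fun i : Fin d => (i : ℕ) < m), η i * (α i * γ i) <
         y * ∑ i : Fin d, η i * (α i * γ i))) :
    y * ⟪zhat, Δp⟫ > 0 := by
  set S := Finset.univ.filter (fun i : Fin d => (i : ℕ) < m)
  have hcoef : ∀ i, ⟪z, e i⟫ * ⟪e i, Δp⟫ = η i * (α i * γ i) := fun i => by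
    rw [real_inner_comm Δp (e i), hη, hα]; ring
  have hfull : ⟪z, Δp⟫ = ∑ i, η i * (α i * γ i) := by
    simp_rw [← e.sum_inner_mul_inner z Δp, hcoef]
  have htrim : ⟪zhat, Δp⟫ = ∑ i, η i * (α i * γ i) - ∑ i ∈ S, η i * (α i * γ i) := by
    simp_rw [hzhat, e.inner_sub_sum_inner_smul_left, hcoef]
  rw [hfull] at hcausal
  rw [htrim, mul_sub, gt_iff_lt, sub_pos]
  rcases hcond with h | h | ⟨-, h⟩ <;> linarith

/-- Proposition 2 (Causal Preservation): if the causal boundary `Δp` classifies `z`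
correctly and one of the three conditions on the top-`m` sums holds, then the trimmed
representation is still classified correctly by the causal boundary. -/
theorem tact_causal_preservation
    (d m : ℕ) (hm1 : 1 ≤ m) (hmd : m ≤ d)
    (y : ℝ) (hy : y = 1 ∨ y = -1)
    (e : OrthonormalBasis (Fin d) ℝ (EuclideanSpace ℝ (Fin d)))
    (z Δq Δp : EuclideanSpace ℝ (Fin d))
    (α γ η : Fin d → ℝ)
    (hα : ∀ i, α i = ⟪z, e i⟫)
    (hγ : ∀ i, γ i = ⟪Δq, e i⟫)
    (hη : ∀ i, ⟪Δp, e i⟫ = η i * γ i)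
    (zhat : EuclideanSpace ℝ (Fin d))
    (hzhat : zhat = z - ∑ i ∈ Finset.univ.filter (fun i : Fin d => (i : ℕ) < m),
      ⟪z, e i⟫ • e i)
    (hcausal : y * ⟪z, Δp⟫ > 0)
    (hcond :
      (y * ∑ i ∈ Finset.univ.filter (fun i : Fin d => (i : ℕ) < m), η i * (α i * γ i) = 0) ∨
      (y * ∑ i ∈ Finset.univ.filter (fun i : Fin d => (i : ℕ) < m), η i * (α i * γ i) < 0) ∨
      (0 < y * ∑ i ∈ Finset.univ.filter (fun i : Fin d => (i : ℕ) < m), η i * (α i * γ i) ∧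
       y * ∑ i ∈ Finset.univ.filter (fun i : Fin d => (i : ℕ) < m), η i * (α i * γ i) <
         y * ∑ i : Fin d, η i * (α i * γ i))) :
    y * ⟪zhat, Δp⟫ > 0 :=
  tact_causal_preservation_general d m y e z Δp α γ η hα hη zhat hzhat hcausal hcond
end

section
/- Let y ∈ {+1, −1}, let e_1, …, e_d be an orthonormal basis of the real inner product space ℝ^d, and let z, Δq, Δp ∈ ℝ^d with coefficients α_i = ⟨z, e_i⟩, γ_i = ⟨Δq, e_i⟩, and ⟨Δp, e_i⟩ = η_i γ_i for real numbers η_i. Fix 1 ≤ m ≤ d and define the trimmed vectors ẑ = z − Σ_{i=1}^m ⟨z, e_i⟩ e_i and Δq̂ = Δq − Σ_{i=1}^m ⟨Δq, e_i⟩ e_i. Suppose z is correctly classified by the learned boundary: y⟨z, Δq⟩ > 0; the removed component positively contributes to the prediction: y⟨z − ẑ, Δq⟩ > 0; the trimmed representation satisfies the causal-preservation property y⟨ẑ, Δp⟩ > 0; and the sums Σ_{i=m+1}^d η_i α_i γ_i and Σ_{i=m+1}^d α_i γ_i have the same sign (their signs, as elements of {−1, 0, +1}, are equal). Then the trimmed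 prediction remains correct: y⟨ẑ, Δq̂⟩ > 0. -/
open scoped RealInnerProductSpace

/-!
Trimming the directions `b i`, `i ∈ s`, leaves exactly the coordinates outside `s`, so both
`⟪ẑ, Δq̂⟫` and `⟪ẑ, Δp⟫` are sums over the kept directions: `∑ αᵢ γᵢ` and `∑ ηᵢ αᵢ γᵢ`.
Causal preservation says `y` has the sign of the second sum, hence by the sign hypothesis
also the sign of the first one.
-/

theorem Real.mul_pos_of_sign_eq {y S T : ℝ} (hsign : Real.sign T = Real.sign S)
    (hyT : 0 < y * T) : 0 < y * S := by
  have hS : S ≠ 0 := by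
    rintro rfl
    rw [Real.sign_zero, Real.sign_eq_zero_iff] at hsign
    simp [hsign] at hyT
  have hSS := Real.sign_mul_pos_of_ne_zero S hS
  rcases mul_pos_iff.mp hyT with ⟨hy, hT⟩ | ⟨hy, hT⟩
  · rw [← hsign, Real.sign_of_pos hT, one_mul] at hSS
    exact mul_pos hy hSS
  · rw [← hsign, Real.sign_of_neg hT, neg_one_mul, neg_pos] at hSS
    exact mul_pos_of_neg_of_neg hy hSS

namespace OrthonormalBasis

variable {ι E : Type*} [Fintype ι] [NormedAddCommGroup E] [InnerProductSpace ℝ E]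

noncomputable def trim (b : OrthonormalBasis ι ℝ E) (s : Finset ι) (v : E) : E :=
  v - ∑ i ∈ s, ⟪v, b i⟫ • b i

variable (b : OrthonormalBasis ι ℝ E) (s : Finset ι)

theorem inner_trim_left [DecidableEq ι] (v w : E) :
    ⟪b.trim s v, w⟫ = ∑ i ∈ sᶜ, ⟪v, b i⟫ * ⟪b i, w⟫ := by
  have hsplit := Finset.sum_add_sum_compl s fun i => ⟪v, b i⟫ * ⟪b i, w⟫
  rw [b.sum_inner_mul_inner] at hsplit
  simp only [trim, inner_sub_left, sum_inner, real_inner_smul_left]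
  linarith

theorem inner_trim_right_of_notMem {i : ι} (hi : i ∉ s) (v : E) :
    ⟪b i, b.trim s v⟫ = ⟪b i, v⟫ := by
  have horth : ∀ j ∈ s, ⟪b i, ⟪v, b j⟫ • b j⟫ = 0 := fun j hj => by
    rw [real_inner_smul_right, b.orthonormal.inner_eq_zero (ne_of_mem_of_not_mem hj hi).symm,
      mul_zero]
  rw [trim, inner_sub_right, inner_sum, Finset.sum_eq_zero horth, sub_zero]

theorem inner_trim_trim [DecidableEq ι] (v w : E) :
    ⟪b.trim s v, b.trim s w⟫ = ∑ i ∈ sᶜ, ⟪v, b i⟫ * ⟪w, b i⟫ := by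
  rw [inner_trim_left]
  refine Finset.sum_congr rfl fun i hi => ?_
  rw [b.inner_trim_right_of_notMem s (Finset.mem_compl.mp hi),
    real_inner_comm w (b i)]

end OrthonormalBasis

theorem tact_preserves_correct_prediction_positive_removed_general
    (d m : ℕ)
    (y : ℝ)
    (e : OrthonormalBasis (Fin d) ℝ (EuclideanSpace ℝ (Fin d)))
    (z Δq Δp : EuclideanSpace ℝ (Fin d))
    (α γ η : Fin d → ℝ)
    (hα : ∀ i, α i = ⟪z, e i⟫)
    (hγ : ∀ i, γ i = ⟪Δq, e i⟫)
    (hη : ∀ i, ⟪Δp, e i⟫ = η i * γ i)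
    (zhat Δqhat : EuclideanSpace ℝ (Fin d))
    (hzhat : zhat = z - ∑ i ∈ Finset.univ.filter (fun i : Fin d => (i : ℕ) < m),
      ⟪z, e i⟫ • e i)
    (hΔqhat : Δqhat = Δq - ∑ i ∈ Finset.univ.filter (fun i : Fin d => (i : ℕ) < m),
      ⟪Δq, e i⟫ • e i)
    (hcausal : y * ⟪zhat, Δp⟫ > 0)
    (hsign : Real.sign (∑ i ∈ Finset.univ.filter (fun i : Fin d => m ≤ (i : ℕ)),
        η i * (α i * γ i)) =
      Real.sign (∑ i ∈ Finset.univ.filter (fun i : Fin d => m ≤ (i : ℕ)), α i * γ i)) :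
    y * ⟪zhat, Δqhat⟫ > 0 := by
  set top := Finset.univ.filter fun i : Fin d => (i : ℕ) < m
  have htop : topᶜ = Finset.univ.filter fun i : Fin d => m ≤ (i : ℕ) := by
    simp only [top, Finset.compl_filter, not_lt]
  have hz : zhat = e.trim top z := hzhat
  have hq : Δqhat = e.trim top Δq := hΔqhat
  have hzq : ⟪zhat, Δqhat⟫ = ∑ i ∈ topᶜ, α i * γ i := by
    rw [hz, hq, e.inner_trim_trim]
    simp only [hα, hγ]
  have hzp : ⟪zhat, Δp⟫ = ∑ i ∈ topᶜ, η i * (α i * γ i) := by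
    rw [hz, e.inner_trim_left]
    refine Finset.sum_congr rfl fun i _ => ?_
    rw [real_inner_comm Δp (e i), hη, hα]
    ring
  rw [hzq, htop]
  rw [hzp, htop] at hcausal
  exact Real.mul_pos_of_sign_eq hsign hcausal

/-- Proposition 3, case 2: if `z` is correctly classified by the learned boundary, the
removed component positively contributes to the prediction, the trimmed representation
satisfies the causal-preservation property, and the remaining coefficient sums for the
causal and learned boundaries have the same sign, then the trimmed prediction remains
correct. -/
theorem tact_preserves_correct_prediction_positive_removed
    (d m : ℕ) (hm1 : 1 ≤ m) (hmd : m ≤ d)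
    (y : ℝ) (hy : y = 1 ∨ y = -1)
    (e : OrthonormalBasis (Fin d) ℝ (EuclideanSpace ℝ (Fin d)))
    (z Δq Δp : EuclideanSpace ℝ (Fin d))
    (α γ η : Fin d → ℝ)
    (hα : ∀ i, α i = ⟪z, e i⟫)
    (hγ : ∀ i, γ i = ⟪Δq, e i⟫)
    (hη : ∀ i, ⟪Δp, e i⟫ = η i * γ i)
    (zhat Δqhat : EuclideanSpace ℝ (Fin d))
    (hzhat : zhat = z - ∑ i ∈ Finset.univ.filter (fun i : Fin d => (i : ℕ) < m),
      ⟪z, e i⟫ • e i)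
    (hΔqhat : Δqhat = Δq - ∑ i ∈ Finset.univ.filter (fun i : Fin d => (i : ℕ) < m),
      ⟪Δq, e i⟫ • e i)
    (hcorrect : y * ⟪z, Δq⟫ > 0)
    (hremoved : y * ⟪z - zhat, Δq⟫ > 0)
    (hcausal : y * ⟪zhat, Δp⟫ > 0)
    (hsign : Real.sign (∑ i ∈ Finset.univ.filter (fun i : Fin d => m ≤ (i : ℕ)),
        η i * (α i * γ i)) =
      Real.sign (∑ i ∈ Finset.univ.filter (fun i : Fin d => m ≤ (i : ℕ)), α i * γ i)) :
    y * ⟪zhat, Δqhat⟫ > 0 :=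
  tact_preserves_correct_prediction_positive_removed_general d m y e z Δq Δp α γ η hα hγ hη zhat
    Δqhat hzhat hΔqhat hcausal hsign
end
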